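/- Let X ⊆ ℤ^d be lattice-convex with finitely many observers. Then rc(X) equals the minimum number k such that there exist sets I_1, ..., I_k ⊆ obs(X) with conv(I_i) ∩ conv(X) = ∅ for each i and obs(X) = I_1 ∪ ... ∪ I_k. -/

import Mathlib

/-- Coercion of an integer point to a real point. -/
def toR {d : ℕ} (z : Fin d → ℤ) : Fin d → ℝ := fun i => (z i : ℝ)

/-- The set of observers of `X ⊆ ℤ^d`. -/
def Obs {d : ℕ} (X : Set (Fin d → ℤ)) : Set (Fin d → ℤ) :=
  {z | z ∉ X ∧ ∀ w : Fin d → ℤ,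
    toR w ∈ convexHull ℝ (toR '' insert z X) → w ∈ insert z X}

/-- `Ax ≤ b` is a relaxation of `X`: its integer solutions are exactly `X`. -/
def Relax {d m : ℕ} (X : Set (Fin d → ℤ)) (A : Fin m → Fin d → ℝ)
    (b : Fin m → ℝ) : Prop :=
  ∀ z : Fin d → ℤ, (∀ i, ∑ j, A i j * (z j : ℝ) ≤ b i) ↔ z ∈ X

/-!
Every row of a relaxation `Ax ≤ b` of `X` cuts off the observers violating it by a hyperplane,
and every observer violates some row, so a relaxation with `m` rows gives a separated cover of
`obs X` by `m` sets. Conversely, strictly separate each set of a cover from `conv X` by a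
hyperplane. A lattice point `z ∉ X` satisfying all these inequalities is impossible: the set
`conv (X ∪ {z})` lies in all the half-spaces and contains an observer, which lies outside one of
them. So both infima are taken over the same set of numbers.
-/

open Set Topology

lemma toR_injective {d : ℕ} : Function.Injective (toR (d := d)) :=
  fun _ _ h => funext fun i => Int.cast_injective (congrFun h i)

lemma isClosedEmbedding_toR {d : ℕ} : IsClosedEmbedding (toR (d := d)) :=
  .piMap fun _ => Int.isClosedEmbedding_coe_real

lemma finite_toR_preimage_convexHull {d : ℕ} {F : Set (Fin d → ℤ)} (hF : F.Finite) :
    (toR ⁻¹' convexHull ℝ (toR '' F)).Finite :=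
  (isClosedEmbedding_toR.isCompact_preimage
    ((hF.image toR).isCompact_convexHull ℝ)).finite_of_discrete

lemma convexHull_image_insert_subset {α E : Type*} [AddCommGroup E] [Module ℝ E]
    {f : α → E} {s : Set α} {v w : α} (hv : f v ∈ convexHull ℝ (f '' insert w s)) :
    convexHull ℝ (f '' insert v s) ⊆ convexHull ℝ (f '' insert w s) := by
  refine convexHull_min ?_ (convex_convexHull ℝ _)
  rw [image_insert_eq]
  exact insert_subset hv
    ((image_mono (subset_insert w s)).trans (subset_convexHull ℝ _))

/-- By Krein–Milman, a compact convex hull is spanned by its extreme points, and these lie in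
every set generating the hull. -/
lemma convexHull_subset_convexHull_inter_of_convexHull_eq {E : Type*} [AddCommGroup E]
    [Module ℝ E] [TopologicalSpace E] [T2Space E] [IsTopologicalAddGroup E]
    [ContinuousSMul ℝ E] [LocallyConvexSpace ℝ E] {s t : Set E} (hs : s.Finite)
    (h : convexHull ℝ s = convexHull ℝ t) :
    convexHull ℝ s ⊆ convexHull ℝ (s ∩ t) := by
  have hext : (convexHull ℝ s).extremePoints ℝ ⊆ s ∩ t :=
    subset_inter extremePoints_convexHull_subset (h ▸ extremePoints_convexHull_subset)
  calc convexHull ℝ s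
      = closure (convexHull ℝ ((convexHull ℝ s).extremePoints ℝ)) :=
        (closure_convexHull_extremePoints (hs.isCompact_convexHull ℝ) (convex_convexHull ℝ s)).symm
    _ ⊆ convexHull ℝ (s ∩ t) :=
        closure_minimal (convexHull_mono hext) ((hs.inter_of_left t).isClosed_convexHull ℝ)

section Lattice

variable {d : ℕ} {X : Set (Fin d → ℤ)}

lemma eq_of_convexHull_insert_eq (hfin : X.Finite)
    (hX : ∀ z : Fin d → ℤ, toR z ∈ convexHull ℝ (toR '' X) ↔ z ∈ X)
    {o w : Fin d → ℤ} (ho : o ∉ X)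
    (h : convexHull ℝ (toR '' insert o X) = convexHull ℝ (toR '' insert w X)) : o = w := by
  by_contra hne
  have hinter : toR '' insert o X ∩ toR '' insert w X ⊆ toR '' X := by
    rw [← image_inter toR_injective]
    refine image_mono fun v ⟨hvo, hvw⟩ => ?_
    rcases hvo with rfl | hvX
    · exact hvw.resolve_left hne
    · exact hvX
  exact ho <| (hX o).1 <| convexHull_mono hinter <|
    convexHull_subset_convexHull_inter_of_convexHull_eq ((hfin.insert o).image toR) h
      (subset_convexHull ℝ _ (mem_image_of_mem toR (mem_insert o X)))

/-- Among the lattice points outside `X` in `conv (X ∪ {z})`, one whose hull with `X` is minimal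
is an observer. -/
lemma exists_mem_obs_mem_convexHull_insert (hfin : X.Finite)
    (hX : ∀ z : Fin d → ℤ, toR z ∈ convexHull ℝ (toR '' X) ↔ z ∈ X)
    {z : Fin d → ℤ} (hz : z ∉ X) :
    ∃ o ∈ Obs X, toR o ∈ convexHull ℝ (toR '' insert z X) := by
  set hull : (Fin d → ℤ) → Set (Fin d → ℝ) := fun v => convexHull ℝ (toR '' insert v X)
  set P := {v | v ∉ X ∧ toR v ∈ hull z}
  have hP : P.Finite := (finite_toR_preimage_convexHull (hfin.insert z)).subset fun v hv => hv.2
  have hzP : z ∈ P := ⟨hz, subset_convexHull ℝ _ (mem_image_of_mem toR (mem_insert z X))⟩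
  obtain ⟨o, ⟨hoX, hoz⟩, hmin⟩ := hP.exists_minimalFor hull P ⟨z, hzP⟩
  refine ⟨o, ⟨hoX, fun w hw => ?_⟩, hoz⟩
  by_contra hwo
  have hwP : w ∈ P :=
    ⟨fun hwX => hwo (mem_insert_of_mem o hwX), convexHull_image_insert_subset hoz hw⟩
  have hsub : hull w ⊆ hull o := convexHull_image_insert_subset hw
  exact hwo (eq_of_convexHull_insert_eq hfin hX hoX ((hmin hwP hsub).antisymm hsub) ▸
    mem_insert w X)

end Lattice

section Separation

variable {ι : Type*} [Fintype ι] {s t : Set (ι → ℝ)}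

lemma isLinearMap_dotProduct (a : ι → ℝ) : IsLinearMap ℝ (a ⬝ᵥ ·) :=
  ⟨dotProduct_add a, fun c x => dotProduct_smul c a x⟩

lemma exists_dotProduct_lt_lt_of_disjoint_convexHull (hs : s.Finite) (ht : t.Finite)
    (h : Disjoint (convexHull ℝ s) (convexHull ℝ t)) :
    ∃ (a : ι → ℝ) (β : ℝ), (∀ x ∈ s, a ⬝ᵥ x < β) ∧ ∀ y ∈ t, β < a ⬝ᵥ y := by
  obtain ⟨f, u, v, hfs, huv, hft⟩ := geometric_hahn_banach_compact_closed
    (convex_convexHull ℝ s) (hs.isCompact_convexHull ℝ) (convex_convexHull ℝ t)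
    (ht.isClosed_convexHull ℝ) h
  classical
  set a : ι → ℝ := fun i => f fun j => if i = j then 1 else 0
  have hf : ∀ x, f x = a ⬝ᵥ x := fun x => by
    rw [dotProduct_comm]
    exact LinearMap.pi_apply_eq_sum_univ (f : (ι → ℝ) →ₗ[ℝ] ℝ) x
  refine ⟨a, u, fun x hx => ?_, fun y hy => ?_⟩
  · rw [← hf]; exact hfs x (subset_convexHull ℝ s hx)
  · rw [← hf]; exact huv.trans (hft y (subset_convexHull ℝ t hy))

lemma disjoint_convexHull_of_dotProduct_le_lt {a : ι → ℝ} {β : ℝ}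
    (hs : ∀ x ∈ s, a ⬝ᵥ x ≤ β) (ht : ∀ y ∈ t, β < a ⬝ᵥ y) :
    Disjoint (convexHull ℝ s) (convexHull ℝ t) :=
  Disjoint.mono (convexHull_min hs (convex_halfSpace_le (isLinearMap_dotProduct a) β))
    (convexHull_min ht (convex_halfSpace_gt (isLinearMap_dotProduct a) β))
    (disjoint_left.2 fun x (hle : a ⬝ᵥ x ≤ β) hlt => hle.not_gt hlt)

end Separation

section Cover

variable {d k : ℕ} {X : Set (Fin d → ℤ)}

def IsSeparatedObsCover (X : Set (Fin d → ℤ)) (I : Fin k → Set (Fin d → ℤ)) : Prop :=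
  (∀ i, I i ⊆ Obs X ∧ convexHull ℝ (toR '' I i) ∩ convexHull ℝ (toR '' X) = ∅) ∧
    Obs X ⊆ ⋃ i, I i

lemma exists_isSeparatedObsCover_of_relax {A : Fin k → Fin d → ℝ} {b : Fin k → ℝ}
    (h : Relax X A b) : ∃ I : Fin k → Set (Fin d → ℤ), IsSeparatedObsCover X I := by
  refine ⟨fun i => {o ∈ Obs X | b i < A i ⬝ᵥ toR o}, fun i => ⟨sep_subset _ _, ?_⟩,
    fun o ho => ?_⟩
  · rw [← disjoint_iff_inter_eq_empty, disjoint_comm]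
    refine disjoint_convexHull_of_dotProduct_le_lt (a := A i) (β := b i) ?_ ?_
    · rintro _ ⟨x, hx, rfl⟩
      exact (h x).2 hx i
    · rintro _ ⟨o, ho, rfl⟩
      exact ho.2
  · obtain ⟨i, hi⟩ : ∃ i, b i < A i ⬝ᵥ toR o := by
      by_contra! hle
      exact ho.1 ((h o).1 hle)
    exact mem_iUnion.2 ⟨i, ho, hi⟩

lemma exists_relax_of_isSeparatedObsCover (hfin : X.Finite)
    (hX : ∀ z : Fin d → ℤ, toR z ∈ convexHull ℝ (toR '' X) ↔ z ∈ X)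
    (hobs : (Obs X).Finite) {I : Fin k → Set (Fin d → ℤ)} (hI : IsSeparatedObsCover X I) :
    ∃ (A : Fin k → Fin d → ℝ) (b : Fin k → ℝ), Relax X A b := by
  choose a β hXa hIa using fun i => exists_dotProduct_lt_lt_of_disjoint_convexHull
    (hfin.image toR) ((hobs.subset (hI.1 i).1).image toR)
    (disjoint_comm.1 (disjoint_iff_inter_eq_empty.2 (hI.1 i).2))
  refine ⟨a, β, fun z => ⟨fun hz => ?_, fun hz i => (hXa i _ (mem_image_of_mem toR hz)).le⟩⟩
  by_contra hzX
  obtain ⟨o, ho, hoz⟩ := exists_mem_obs_mem_convexHull_insert hfin hX hzX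
  obtain ⟨i, hoi⟩ := mem_iUnion.1 (hI.2 ho)
  have hle : ∀ x ∈ toR '' insert z X, a i ⬝ᵥ x ≤ β i := by
    rintro _ ⟨v, rfl | hv, rfl⟩
    exacts [hz i, (hXa i _ (mem_image_of_mem toR hv)).le]
  exact disjoint_convexHull_of_dotProduct_le_lt hle (hIa i)
    |>.ne_of_mem hoz (subset_convexHull ℝ _ (mem_image_of_mem toR hoi)) rfl

end Cover

/-- for a lattice-convex `X` with finitely many observers, `rc(X)`
equals the minimum number of subsets of `obs(X)`, each separable from `conv(X)`,
needed to cover `obs(X)`. -/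
theorem rc_eq_min_cover (d : ℕ) (X : Set (Fin d → ℤ)) (hfin : X.Finite)
    (hX : ∀ z : Fin d → ℤ, toR z ∈ convexHull ℝ (toR '' X) ↔ z ∈ X)
    (hobs : (Obs X).Finite) :
    sInf {m : ℕ | ∃ A : Fin m → Fin d → ℝ, ∃ b : Fin m → ℝ, Relax X A b} =
    sInf {k : ℕ | ∃ I : Fin k → Set (Fin d → ℤ),
      (∀ i, I i ⊆ Obs X ∧
        convexHull ℝ (toR '' I i) ∩ convexHull ℝ (toR '' X) = ∅) ∧
      Obs X ⊆ ⋃ i, I i} :=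
  congrArg sInf <| Set.ext fun _ =>
    ⟨fun ⟨_, _, h⟩ => exists_isSeparatedObsCover_of_relax h,
      fun ⟨_, hI⟩ => exists_relax_of_isSeparatedObsCover hfin hX hobs hI⟩
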